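/- For every n ∈ ℕ and every column index 1 ≤ j ≤ 2^n, the sum of the absolute values of the entries in rows 2 through 2^n of the column j of the 2^n × 2^n Haar matrix H_n equals 2^{-n/2} Σ_{m=0}^{n-1} 2^{m/2} = (2^{1/2} - 2^{-(n-1)/2})/(2^{1/2} - 1), which is strictly less than 1 + √2. -/

import Mathlib

/-! At a point `x ∈ (0, 1)` that is not a dyadic rational of level `m + 1`, exactly one Haar
function of level `m` is nonzero, namely the one whose support `((k - 1) / 2^m, k / 2^m)` contains
`x` (with `k = ⌊2^m x⌋ + 1`), and its absolute value is `2^{m/2}`. The midpoints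
`(j - 1/2) / 2^n` are odd multiples of `2^{-(n+1)}`, so this applies at every level `m < n`, and the
column sum is `2^{-n/2} ∑_{m<n} √2^m = (1 - √2^{-n}) / (√2 - 1) < 1 / (√2 - 1) = 1 + √2`. -/

open MeasureTheory Classical in
/-- The Haar function `h_j^{(k)}` of level `k`, `1 ≤ j ≤ 2^k`. -/
noncomputable def haarFn (k j : ℕ) (t : ℝ) : ℝ :=
  if (2 * (j : ℝ) - 2) / 2 ^ (k + 1) < t ∧ t < (2 * (j : ℝ) - 1) / 2 ^ (k + 1) then
    (2 : ℝ) ^ ((k : ℝ) / 2)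
  else if (2 * (j : ℝ) - 1) / 2 ^ (k + 1) < t ∧ t < (2 * (j : ℝ)) / 2 ^ (k + 1) then
    -((2 : ℝ) ^ ((k : ℝ) / 2))
  else 0

/-- The Haar system `h_n`: `h_1 = 1` and `h_{2^k + j} = h_j^{(k)}`. -/
noncomputable def haar (n : ℕ) : ℝ → ℝ :=
  if n ≤ 1 then (fun _ => 1)
  else haarFn (Nat.log2 (n - 1)) (n - 2 ^ Nat.log2 (n - 1))

open Finset

lemma sub_one_lt_and_lt_iff_eq_floor_add_one {y : ℝ} (hy : 0 ≤ y) (hyz : ∀ z : ℕ, y ≠ z)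
    (k : ℕ) : ((k : ℝ) - 1 < y ∧ y < k) ↔ k = ⌊y⌋₊ + 1 := by
  rcases k with _ | k
  · simp only [CharP.cast_eq_zero, zero_sub, right_eq_add, Nat.add_eq_zero_iff, one_ne_zero,
      and_false, iff_false, not_and, not_lt]
    exact fun _ => hy
  · rw [Nat.add_right_cancel_iff, eq_comm, Nat.floor_eq_iff hy, Nat.cast_succ, add_sub_cancel_right,
      (hyz k).symm.le_iff_lt]

lemma abs_haarFn {m k : ℕ} {x : ℝ} (hx : x ≠ (2 * (k : ℝ) - 1) / 2 ^ (m + 1)) :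
    |haarFn m k x| =
      if ((k : ℝ) - 1) / 2 ^ m < x ∧ x < (k : ℝ) / 2 ^ m then (2 : ℝ) ^ ((m : ℝ) / 2) else 0 := by
  have hleft : (2 * (k : ℝ) - 2) / 2 ^ (m + 1) = ((k : ℝ) - 1) / 2 ^ m := by
    rw [pow_succ]; field_simp
  have hright : (2 * (k : ℝ)) / 2 ^ (m + 1) = (k : ℝ) / 2 ^ m := by
    rw [pow_succ]; field_simp
  have hmid_lt : ((k : ℝ) - 1) / 2 ^ m < (2 * (k : ℝ) - 1) / 2 ^ (m + 1) := by
    rw [← hleft]; gcongr; linarith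
  have hlt_mid : (2 * (k : ℝ) - 1) / 2 ^ (m + 1) < (k : ℝ) / 2 ^ m := by
    rw [← hright]; gcongr; linarith
  have hpos : (0 : ℝ) < 2 ^ ((m : ℝ) / 2) := by positivity
  unfold haarFn
  rw [hleft, hright]
  by_cases hin : ((k : ℝ) - 1) / 2 ^ m < x ∧ x < (k : ℝ) / 2 ^ m
  · rw [if_pos hin]
    rcases hx.lt_or_gt with hlt | hgt
    · rw [if_pos ⟨hin.1, hlt⟩, abs_of_pos hpos]
    · rw [if_neg fun h => lt_asymm h.2 hgt, if_pos ⟨hgt, hin.2⟩, abs_neg, abs_of_pos hpos]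
  · rw [if_neg hin, if_neg fun h => hin ⟨h.1, h.2.trans hlt_mid⟩,
      if_neg fun h => hin ⟨hmid_lt.trans h.1, h.2⟩, abs_zero]

lemma sum_abs_haarFn {m : ℕ} {x : ℝ} (hx01 : x ∈ Set.Ioo 0 1)
    (hx : ∀ z : ℤ, x * 2 ^ (m + 1) ≠ z) :
    ∑ k ∈ Icc 1 (2 ^ m), |haarFn m k x| = (2 : ℝ) ^ ((m : ℝ) / 2) := by
  obtain ⟨hx0, hx1⟩ := hx01
  have h2m : (0 : ℝ) < 2 ^ m := by positivity
  have hnat : ∀ z : ℕ, x * 2 ^ m ≠ z := by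
    intro z h
    apply hx (2 * z)
    rw [pow_succ, ← mul_assoc, h]
    push_cast; ring
  have hmid : ∀ k : ℕ, x ≠ (2 * (k : ℝ) - 1) / 2 ^ (m + 1) := by
    intro k h
    apply hx (2 * k - 1)
    rw [h]; push_cast; field_simp
  have hmem : ∀ k : ℕ, (((k : ℝ) - 1) / 2 ^ m < x ∧ x < (k : ℝ) / 2 ^ m) ↔
      k = ⌊x * 2 ^ m⌋₊ + 1 := by
    intro k
    rw [div_lt_iff₀ h2m, lt_div_iff₀ h2m]
    exact sub_one_lt_and_lt_iff_eq_floor_add_one (by positivity) hnat k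
  have hfloor : ⌊x * 2 ^ m⌋₊ + 1 ∈ Icc 1 (2 ^ m) := by
    have : ⌊x * 2 ^ m⌋₊ < 2 ^ m := by
      rw [Nat.floor_lt (by positivity)]; push_cast; nlinarith
    simp only [mem_Icc]; omega
  simp only [abs_haarFn (hmid _), hmem, sum_ite_eq', hfloor, if_true]

lemma haar_two_pow_add {m k : ℕ} (hk1 : 1 ≤ k) (hk : k ≤ 2 ^ m) :
    haar (2 ^ m + k) = haarFn m k := by
  have hlog : Nat.log2 (2 ^ m + k - 1) = m := by
    rw [Nat.log2_eq_log_two]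
    apply Nat.log_eq_of_pow_le_of_lt_pow (by omega)
    rw [pow_succ]; omega
  rw [haar, if_neg (by have := Nat.one_le_two_pow (n := m); omega), hlog, Nat.add_sub_cancel_left]

lemma sum_Icc_two_two_pow_eq_sum_levels {M : Type*} [AddCommMonoid M] (f : ℕ → M) (n : ℕ) :
    ∑ i ∈ Icc 2 (2 ^ n), f i = ∑ m ∈ range n, ∑ k ∈ Icc 1 (2 ^ m), f (2 ^ m + k) := by
  induction n with
  | zero => simp
  | succ n ih =>
    have hlevel : Ioc (2 ^ n) (2 ^ (n + 1)) = (Icc 1 (2 ^ n)).map (addLeftEmbedding (2 ^ n)) := by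
      rw [← Icc_add_one_left_eq_Ioc, map_add_left_Icc, pow_succ]
      congr 1; omega
    have hIcc : ∀ N, Icc 2 N = Ioc 1 N := fun N => Icc_add_one_left_eq_Ioc 1 N
    rw [sum_range_succ, ← ih, hIcc, hIcc,
      ← sum_Ioc_consecutive f Nat.one_le_two_pow (Nat.pow_le_pow_right two_pos n.le_succ),
      hlevel, sum_map]
    rfl

lemma sub_half_mul_inv_two_pow_mem_Ioo {n j : ℕ} (hj1 : 1 ≤ j) (hj : j ≤ 2 ^ n) :
    ((j : ℝ) - 1 / 2) * ((2 : ℝ) ^ n)⁻¹ ∈ Set.Ioo 0 1 := by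
  have hj1' : (1 : ℝ) ≤ j := by exact_mod_cast hj1
  have hj' : (j : ℝ) ≤ 2 ^ n := by exact_mod_cast hj
  rw [← div_eq_mul_inv, Set.mem_Ioo, div_lt_one (by positivity)]
  exact ⟨div_pos (by linarith) (by positivity), by linarith⟩

lemma sub_half_mul_inv_two_pow_mul_two_pow_ne_int {n m j : ℕ} (hm : m < n) (z : ℤ) :
    ((j : ℝ) - 1 / 2) * ((2 : ℝ) ^ n)⁻¹ * 2 ^ (m + 1) ≠ z := by
  obtain ⟨k, rfl⟩ : ∃ k, n = m + 1 + k := ⟨n - (m + 1), by omega⟩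
  intro h
  have hreal : 2 * (j : ℝ) - 1 = 2 * (z * 2 ^ k) := by
    rw [← h, pow_add, pow_succ]; field_simp
  have hint : 2 * (j : ℤ) - 1 = 2 * (z * 2 ^ k) := by exact_mod_cast hreal
  omega

lemma geom_sum_div_pow_lt {r : ℝ} (hr : 1 < r) (n : ℕ) :
    (∑ m ∈ range n, r ^ m) / r ^ n < (r - 1)⁻¹ := by
  have hr1 : 0 < r - 1 := by linarith
  rw [geom_sum_eq hr.ne', div_div, div_lt_iff₀ (by positivity), inv_mul_eq_div,
    mul_div_cancel_left₀ _ hr1.ne']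
  linarith

lemma inv_sqrt_two_sub_one : (√2 - 1)⁻¹ = 1 + √2 := by
  refine inv_eq_of_mul_eq_one_right ?_
  ring_nf
  norm_num

theorem stmt19 (n j : ℕ) (hj1 : 1 ≤ j) (hj : j ≤ 2 ^ n) :
    ∑ i ∈ Finset.Icc 2 (2 ^ n),
        |(2 : ℝ) ^ (-(n : ℝ) / 2) * haar i (((j : ℝ) - 1 / 2) * ((2 : ℝ) ^ n)⁻¹)|
      = (2 : ℝ) ^ (-(n : ℝ) / 2) * ∑ m ∈ Finset.range n, (2 : ℝ) ^ ((m : ℝ) / 2)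
    ∧ (2 : ℝ) ^ (-(n : ℝ) / 2) * ∑ m ∈ Finset.range n, (2 : ℝ) ^ ((m : ℝ) / 2)
        < 1 + Real.sqrt 2 := by
  have hx := sub_half_mul_inv_two_pow_mem_Ioo hj1 hj
  constructor
  · simp_rw [abs_mul, abs_of_nonneg (by positivity : (0 : ℝ) ≤ 2 ^ (-(n : ℝ) / 2))]
    rw [← mul_sum, sum_Icc_two_two_pow_eq_sum_levels]
    congr 1
    refine sum_congr rfl fun m hm => ?_
    rw [← sum_abs_haarFn hx (sub_half_mul_inv_two_pow_mul_two_pow_ne_int (mem_range.1 hm))]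
    exact sum_congr rfl fun k hk => by rw [haar_two_pow_add (mem_Icc.1 hk).1 (mem_Icc.1 hk).2]
  · simp only [Real.rpow_div_two_eq_sqrt _ zero_le_two, Real.rpow_neg (Real.sqrt_nonneg 2),
      Real.rpow_natCast]
    rw [inv_mul_eq_div, ← inv_sqrt_two_sub_one]
    exact geom_sum_div_pow_lt Real.one_lt_sqrt_two n
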